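/- arXiv:1901.04046 — 8 statements merged into one kernel-verified Lean document; each statement's English description precedes it below -/
import Mathlib

section
/- For every α ∈ (0,1) and all real numbers a, b: φ(a,b) = 0 if and only if a ≥ 0, b ≥ 0, and a·b = 0 (i.e., the penalized Fischer–Burmeister function is an NCP function). -/
/-!
If `a, b > 0` then `√(a² + b²) < a + b`, so both summands of `φ` are positive. Otherwise the
penalty `max a 0 * max b 0` vanishes and `φ` is `α` times the Fischer–Burmeister function
`a + b - √(a² + b²)`, whose zeros are exactly the complementary pairs.
-/

open Real

theorem sqrt_sq_add_sq_lt_add {a b : ℝ} (ha : 0 < a) (hb : 0 < b) : √(a ^ 2 + b ^ 2) < a + b :=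
  (sqrt_lt' (by positivity)).2 (by nlinarith [mul_pos ha hb])

theorem add_sub_sqrt_sq_add_sq_eq_zero_iff {a b : ℝ} :
    a + b - √(a ^ 2 + b ^ 2) = 0 ↔ 0 ≤ a ∧ 0 ≤ b ∧ a * b = 0 := by
  rw [sub_eq_zero, eq_comm]
  constructor
  · intro h
    have hsq := sq_sqrt (by positivity : 0 ≤ a ^ 2 + b ^ 2)
    rw [h] at hsq
    have hab : a * b = 0 := by linear_combination hsq / 2
    have hsa : |a| ≤ √(a ^ 2 + b ^ 2) := abs_le_sqrt (by nlinarith)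
    have hsb : |b| ≤ √(a ^ 2 + b ^ 2) := abs_le_sqrt (by nlinarith)
    exact ⟨by linarith [le_abs_self b], by linarith [le_abs_self a], hab⟩
  · rintro ⟨ha, hb, hab⟩
    rw [sqrt_eq_iff_eq_sq (by positivity) (by positivity)]
    linear_combination -2 * hab

theorem max_mul_max_eq_zero_of_not_pos {a b : ℝ} (h : ¬(0 < a ∧ 0 < b)) :
    max a 0 * max b 0 = 0 := by
  rcases not_and_or.1 h with ha | hb
  · rw [max_eq_right (not_lt.1 ha), zero_mul]
  · rw [max_eq_right (not_lt.1 hb), mul_zero]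

/-- The penalized Fischer–Burmeister function is an NCP function:
for every `α ∈ (0,1)` and all reals `a b`, `φ α a b = 0 ↔ a ≥ 0 ∧ b ≥ 0 ∧ a * b = 0`. -/
theorem pfb_is_ncp_function (α : ℝ) (hα : α ∈ Set.Ioo (0:ℝ) 1) (a b : ℝ) :
    α * (a + b - Real.sqrt (a ^ 2 + b ^ 2)) + (1 - α) * max a 0 * max b 0 = 0 ↔
      0 ≤ a ∧ 0 ≤ b ∧ a * b = 0 := by
  obtain ⟨hα0, hα1⟩ := hα
  by_cases hpos : 0 < a ∧ 0 < b
  · obtain ⟨ha, hb⟩ := hpos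
    have hfb : 0 < a + b - √(a ^ 2 + b ^ 2) := sub_pos.2 (sqrt_sq_add_sq_lt_add ha hb)
    have hpen : 0 ≤ (1 - α) * max a 0 * max b 0 :=
      mul_nonneg (mul_nonneg (sub_nonneg.2 hα1.le) (le_max_right a 0)) (le_max_right b 0)
    refine iff_of_false (add_pos_of_pos_of_nonneg (mul_pos hα0 hfb) hpen).ne' ?_
    rintro ⟨-, -, hab⟩
    exact (mul_pos ha hb).ne' hab
  · rw [mul_assoc, max_mul_max_eq_zero_of_not_pos hpos, mul_zero, add_zero,
      mul_eq_zero, or_iff_right hα0.ne', add_sub_sqrt_sq_add_sq_eq_zero_iff]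
end

section
/- The function ψ : ℝ² → ℝ defined by ψ(a,b) = ½·φ(a,b)² is continuously differentiable on all of ℝ², even though φ itself is not differentiable at (0,0). -/
/-!
Off the complementarity set `{a ≥ 0, b ≥ 0, a b = 0}` the function `φ` is smooth, and on it `φ`
vanishes. Since `φ` is locally Lipschitz, near a zero `x` of `φ` we have `φ y = O(‖y - x‖)` and
`φ y → 0`, so `φ² = o(‖y - x‖)`: the square has derivative `0` at `x`, and its derivative
`2 φ Dφ` elsewhere tends to `0` because `Dφ` is bounded by the local Lipschitz constant.
Along the axis, `φ (t, 0) = α (t - |t|)` exhibits the kink of `φ` at the origin.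
-/

open Filter Asymptotics Topology

section SquareOfLipschitz

variable {𝕜 E F : Type*} [NontriviallyNormedField 𝕜] [NormedAddCommGroup E] [NormedSpace 𝕜 E]
  [NormedAddCommGroup F] [NormedSpace 𝕜 F]

lemma LocallyLipschitz.isBigO_sub {g : E → F} (hg : LocallyLipschitz g) (x : E) :
    (fun y => g y - g x) =O[𝓝 x] (fun y => y - x) := by
  obtain ⟨K, t, ht, hK⟩ := hg x
  refine .of_bound K ?_
  filter_upwards [ht] with y hy using hK.norm_sub_le hy (mem_of_mem_nhds ht)

variable (𝕜) in
lemma LocallyLipschitz.exists_eventually_norm_fderiv_le {g : E → F} (hg : LocallyLipschitz g)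
    (x : E) : ∃ K : ℝ, ∀ᶠ y in 𝓝 x, ‖fderiv 𝕜 g y‖ ≤ K := by
  obtain ⟨K, t, ht, hK⟩ := hg x
  exact ⟨K, by filter_upwards [eventually_mem_nhds_iff.2 ht] with y hy
    using norm_fderiv_le_of_lipschitzOn 𝕜 hy hK⟩

variable {f : E → 𝕜}

lemma LocallyLipschitz.hasFDerivAt_sq_of_eq_zero (hf : LocallyLipschitz f) {x : E}
    (hx : f x = 0) : HasFDerivAt (fun y => f y ^ 2) (0 : E →L[𝕜] 𝕜) x := by
  have hsmall : f =o[𝓝 x] (fun _ => (1 : ℝ)) :=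
    (isLittleO_one_iff ℝ).2 (hx ▸ hf.continuous.tendsto x)
  have hbig : f =O[𝓝 x] (fun y => y - x) := by simpa [hx] using hf.isBigO_sub x
  refine .of_isLittleO ?_
  simpa [hx, sq] using hsmall.mul_isBigO hbig.norm_right |>.norm_right

theorem LocallyLipschitz.contDiff_sq (hf : LocallyLipschitz f) {U : Set E} (hU : IsOpen U)
    (hfU : ContDiffOn 𝕜 1 f U) (hf0 : ∀ x ∉ U, f x = 0) :
    ContDiff 𝕜 1 (fun x => f x ^ 2) := by
  have hD0 : ∀ x ∉ U, (2 * f x) • fderiv 𝕜 f x = 0 := fun x hx => by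
    rw [hf0 x hx, mul_zero]; exact zero_smul 𝕜 (fderiv 𝕜 f x)
  have hderiv : ∀ x, HasFDerivAt (fun y => f y ^ 2) ((2 * f x) • fderiv 𝕜 f x) x := by
    intro x
    by_cases hx : x ∈ U
    · simpa using ((hfU.differentiableOn one_ne_zero).differentiableAt
        (hU.mem_nhds hx)).hasFDerivAt.pow 2
    · exact hD0 x hx ▸ hf.hasFDerivAt_sq_of_eq_zero (hf0 x hx)
  have hcont : Continuous fun x => (2 * f x) • fderiv 𝕜 f x := by
    refine continuous_iff_continuousAt.2 fun x => ?_
    by_cases hx : x ∈ U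
    · exact (continuousAt_const.mul hf.continuous.continuousAt).smul
        ((hfU.continuousOn_fderiv_of_isOpen hU le_rfl).continuousAt (hU.mem_nhds hx))
    · obtain ⟨K, hK⟩ := hf.exists_eventually_norm_fderiv_le 𝕜 x
      have hlim : Tendsto (fun y => ‖2 * f y‖ * K) (𝓝 x) (𝓝 0) := by
        simpa [hf0 x hx] using ((continuous_const.mul hf.continuous).norm.mul_const K).tendsto x
      rw [ContinuousAt, hD0 x hx]
      refine squeeze_zero_norm' ?_ hlim
      filter_upwards [hK] with y hy
      exact (norm_smul_le _ _).trans (mul_le_mul_of_nonneg_left hy (norm_nonneg _))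
  have hfderiv : fderiv 𝕜 (fun x => f x ^ 2) = fun x => (2 * f x) • fderiv 𝕜 f x :=
    funext fun x => (hderiv x).fderiv
  exact contDiff_one_iff_fderiv.2 ⟨fun x => (hderiv x).differentiableAt, hfderiv ▸ hcont⟩

end SquareOfLipschitz

lemma LocallyLipschitz.mul_of_normedAlgebra {X 𝔸 : Type*} [PseudoMetricSpace X] [NormedRing 𝔸]
    [NormedAlgebra ℝ 𝔸] {f g : X → 𝔸} (hf : LocallyLipschitz f) (hg : LocallyLipschitz g) :
    LocallyLipschitz fun x => f x * g x :=
  (contDiff_mul (𝕜 := ℝ) (n := 1)).locallyLipschitz.comp (hf.prodMk hg)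

lemma locallyLipschitz_sqrt_sq_add_sq :
    LocallyLipschitz fun p : ℝ × ℝ => Real.sqrt (p.1 ^ 2 + p.2 ^ 2) := by
  have h : (fun p : ℝ × ℝ => Real.sqrt (p.1 ^ 2 + p.2 ^ 2)) = fun p => ‖WithLp.toLp 2 p‖ := by
    funext p; simp [WithLp.prod_norm_eq_of_L2]
  rw [h]
  exact (lipschitzWith_one_norm.comp (WithLp.prod_lipschitzWith_toLp 2 ℝ ℝ)).locallyLipschitz

section PenalizedFB

noncomputable def penalizedFB (α : ℝ) (p : ℝ × ℝ) : ℝ :=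
  α * (p.1 + p.2 - Real.sqrt (p.1 ^ 2 + p.2 ^ 2)) + (1 - α) * max p.1 0 * max p.2 0

def complementaritySet : Set (ℝ × ℝ) := {p | 0 ≤ p.1 ∧ 0 ≤ p.2 ∧ p.1 * p.2 = 0}

lemma isClosed_complementaritySet : IsClosed complementaritySet :=
  (isClosed_le continuous_const continuous_fst).inter <|
    (isClosed_le continuous_const continuous_snd).inter <|
      isClosed_eq (continuous_fst.mul continuous_snd) continuous_const

variable {α : ℝ}

lemma penalizedFB_eq_zero {p : ℝ × ℝ} (hp : p ∈ complementaritySet) : penalizedFB α p = 0 := by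
  obtain ⟨h1, h2, h12⟩ := hp
  rcases mul_eq_zero.1 h12 with h | h <;> simp [penalizedFB, h, h1, h2]

lemma locallyLipschitz_penalizedFB : LocallyLipschitz (penalizedFB α) := by
  have hfst : LocallyLipschitz (Prod.fst : ℝ × ℝ → ℝ) := LipschitzWith.prod_fst.locallyLipschitz
  have hsnd : LocallyLipschitz (Prod.snd : ℝ × ℝ → ℝ) := LipschitzWith.prod_snd.locallyLipschitz
  have hc : ∀ c : ℝ, LocallyLipschitz fun _ : ℝ × ℝ => c := LocallyLipschitz.const
  exact ((hc α).mul_of_normedAlgebra ((hfst.add hsnd).sub locallyLipschitz_sqrt_sq_add_sq)).add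
    (((hc (1 - α)).mul_of_normedAlgebra (hfst.max_const 0)).mul_of_normedAlgebra
      (hsnd.max_const 0))

lemma contDiffAt_max_mul_max {n : WithTop ℕ∞} {p : ℝ × ℝ} (hp : p ∉ complementaritySet) :
    ContDiffAt ℝ n (fun q : ℝ × ℝ => max q.1 0 * max q.2 0) p := by
  by_cases h1 : p.1 < 0
  · refine contDiffAt_const (c := 0).congr_of_eventuallyEq ?_
    filter_upwards [(isOpen_lt continuous_fst continuous_const).mem_nhds h1] with q hq
    simp [max_eq_right (le_of_lt hq)]
  by_cases h2 : p.2 < 0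
  · refine contDiffAt_const (c := 0).congr_of_eventuallyEq ?_
    filter_upwards [(isOpen_lt continuous_snd continuous_const).mem_nhds h2] with q hq
    simp [max_eq_right (le_of_lt hq)]
  have hpos : 0 < p.1 ∧ 0 < p.2 := by
    rw [not_lt] at h1 h2
    exact ⟨h1.lt_of_ne' fun h => hp ⟨h1, h2, by simp [h]⟩,
      h2.lt_of_ne' fun h => hp ⟨h1, h2, by simp [h]⟩⟩
  refine (contDiffAt_fst.mul contDiffAt_snd).congr_of_eventuallyEq ?_
  filter_upwards [(isOpen_lt continuous_const continuous_fst).mem_nhds hpos.1,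
    (isOpen_lt continuous_const continuous_snd).mem_nhds hpos.2] with q hq1 hq2
  rw [max_eq_left hq1.le, max_eq_left hq2.le]

lemma contDiffAt_penalizedFB {n : WithTop ℕ∞} {p : ℝ × ℝ} (hp : p ∉ complementaritySet) :
    ContDiffAt ℝ n (penalizedFB α) p := by
  have hp0 : p.1 ^ 2 + p.2 ^ 2 ≠ 0 := by
    contrapose! hp
    obtain ⟨h1, h2⟩ : p.1 = 0 ∧ p.2 = 0 := by
      constructor <;> nlinarith [sq_nonneg p.1, sq_nonneg p.2]
    simp [complementaritySet, h1, h2]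
  have hsqrt : ContDiffAt ℝ n (fun q : ℝ × ℝ => Real.sqrt (q.1 ^ 2 + q.2 ^ 2)) p :=
    ((contDiffAt_fst.pow 2).add (contDiffAt_snd.pow 2)).sqrt hp0
  have h := (contDiffAt_const (c := α).mul ((contDiffAt_fst.add contDiffAt_snd).sub hsqrt)).add
    (contDiffAt_const (c := 1 - α).mul (contDiffAt_max_mul_max (n := n) hp))
  unfold penalizedFB
  simpa only [← mul_assoc] using h

lemma not_differentiableAt_penalizedFB_zero (hα : α ≠ 0) :
    ¬ DifferentiableAt ℝ (penalizedFB α) (0, 0) := by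
  intro h
  have hline : DifferentiableAt ℝ (fun t : ℝ => penalizedFB α (t, 0)) 0 :=
    h.comp (f := fun t : ℝ => (t, (0 : ℝ))) 0
      (differentiableAt_id.prodMk (differentiableAt_const 0))
  have habs : (abs : ℝ → ℝ) = fun t => t - α⁻¹ * penalizedFB α (t, 0) := by
    funext t
    simp [penalizedFB, Real.sqrt_sq_eq_abs, hα]
  exact not_differentiableAt_abs_zero (habs ▸ differentiableAt_id.sub (hline.const_mul α⁻¹))

end PenalizedFB

/-- For `α ∈ (0,1)`, the squared penalized Fischer–Burmeister merit function
`ψ(a,b) = ½ φ(a,b)²` is continuously differentiable on all of `ℝ²`, even though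
`φ` itself is not differentiable at `(0,0)`. -/
theorem pfb_squared_contDiff (α : ℝ) (hα : α ∈ Set.Ioo (0:ℝ) 1) :
    ContDiff ℝ 1 (fun p : ℝ × ℝ =>
      (1 / 2) * (α * (p.1 + p.2 - Real.sqrt (p.1 ^ 2 + p.2 ^ 2)) +
        (1 - α) * max p.1 0 * max p.2 0) ^ 2) ∧
    ¬ DifferentiableAt ℝ (fun p : ℝ × ℝ =>
      α * (p.1 + p.2 - Real.sqrt (p.1 ^ 2 + p.2 ^ 2)) +
        (1 - α) * max p.1 0 * max p.2 0) (0, 0) := by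
  refine ⟨contDiff_const.mul ?_, not_differentiableAt_penalizedFB_zero hα.1.ne'⟩
  exact locallyLipschitz_penalizedFB.contDiff_sq isClosed_complementaritySet.isOpen_compl
    (fun p hp => (contDiffAt_penalizedFB hp).contDiffWithinAt)
    (fun p hp => penalizedFB_eq_zero (not_not.1 hp))
end

section
/- (Regularity of the C-subdifferential) Let σ > 0 and let γ, μ ∈ ℝ^q satisfy γ_j ≥ 0, μ_j ≥ 0, and (γ_j, μ_j) ≠ (0,0) for every j = 1,…,q. Then the (n+m+q)×(n+m+q) block matrix V = [[H + σI_n, Gᵀ, Aᵀ], [−G, σI_m, 0], [−diag(γ)·A, 0, diag(μ + σγ)]] is nonsingular. -/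
/-!
If `V (x, y, w) = 0`, pairing the first block row with `x` and using the second row `G x = σ y`
gives `xᵀ H x + σ ‖x‖² + σ ‖y‖² + ⟨A x, w⟩ = 0`. The third row reads
`(μ_j + σ γ_j) w_j = γ_j (A x)_j` with `μ_j + σ γ_j > 0` and `γ_j ≥ 0`, which forces
`(A x)_j w_j ≥ 0`. So every term vanishes: `x = 0`, and then `y = 0` and `w = 0`.
-/

open Matrix

lemma add_mul_pos_of_ne_zero {a b σ : ℝ} (ha : 0 ≤ a) (hb : 0 ≤ b) (hab : (a, b) ≠ (0, 0))
    (hσ : 0 < σ) : 0 < b + σ * a := by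
  rcases ha.lt_or_eq with ha | rfl
  · positivity
  · have hb' : b ≠ 0 := fun hb0 => hab (by rw [hb0])
    simpa using hb.lt_of_ne' hb'

section

variable {K : Type*} [Field K] [LinearOrder K] [IsStrictOrderedRing K]

lemma mul_nonneg_of_mul_eq_mul {d g w z : K} (hd : 0 < d) (hg : 0 ≤ g) (h : d * w = g * z) :
    0 ≤ z * w := by
  rcases hg.eq_or_lt with rfl | hg
  · have hw : w = 0 := by simpa [hd.ne'] using h
    simp [hw]
  · refine (mul_nonneg_iff_of_pos_left hg).1 ?_
    calc 0 ≤ d * (w * w) := mul_nonneg hd.le (mul_self_nonneg w)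
      _ = g * (z * w) := by rw [← mul_assoc, h, mul_assoc]

lemma dotProduct_nonneg_of_mul_eq_mul {τ : Type*} [Fintype τ] {d g w z : τ → K}
    (hd : ∀ j, 0 < d j) (hg : ∀ j, 0 ≤ g j) (h : ∀ j, d j * w j = g j * z j) : 0 ≤ z ⬝ᵥ w :=
  Finset.sum_nonneg fun j _ => mul_nonneg_of_mul_eq_mul (hd j) (hg j) (h j)

end

lemma eq_zero_of_regularized_kkt {ι κ τ : Type*} [Fintype ι] [Fintype κ] [Fintype τ]
    {H : Matrix ι ι ℝ} {G : Matrix κ ι ℝ} {A : Matrix τ ι ℝ} {σ : ℝ} {d γ : τ → ℝ}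
    {x : ι → ℝ} {y : κ → ℝ} {w : τ → ℝ} (hH : H.PosSemidef) (hσ : 0 < σ)
    (hd : ∀ j, 0 < d j) (hγ : ∀ j, 0 ≤ γ j)
    (h₁ : H *ᵥ x + σ • x + Gᵀ *ᵥ y + Aᵀ *ᵥ w = 0) (h₂ : G *ᵥ x = σ • y)
    (h₃ : ∀ j, d j * w j = γ j * (A *ᵥ x) j) :
    x = 0 ∧ y = 0 ∧ w = 0 := by
  have energy : x ⬝ᵥ (H *ᵥ x) + σ * (x ⬝ᵥ x) + σ * (y ⬝ᵥ y) + (A *ᵥ x) ⬝ᵥ w = 0 := by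
    have := congrArg (x ⬝ᵥ ·) h₁
    simpa only [dotProduct_add, dotProduct_smul, dotProduct_mulVec x _ y, dotProduct_mulVec x _ w,
      vecMul_transpose, h₂, smul_dotProduct, smul_eq_mul, dotProduct_zero] using this
  have hHx : 0 ≤ x ⬝ᵥ (H *ᵥ x) := by simpa using hH.dotProduct_mulVec_nonneg x
  have hAw := dotProduct_nonneg_of_mul_eq_mul hd hγ h₃
  have hxx : 0 ≤ x ⬝ᵥ x := by simpa using dotProduct_star_self_nonneg x
  have hyy : 0 ≤ y ⬝ᵥ y := by simpa using dotProduct_star_self_nonneg y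
  have hx : x = 0 := dotProduct_self_eq_zero.1 (le_antisymm (by nlinarith) hxx)
  have hy : y = 0 := by simpa [hx, hσ.ne'] using h₂.symm
  refine ⟨hx, hy, funext fun j => ?_⟩
  simpa [hx, (hd j).ne'] using h₃ j

lemma Matrix.isUnit_of_mulVec_sumElim_eq_zero {K ι κ τ : Type*} [Field K] [Fintype ι] [Fintype κ]
    [Fintype τ] [DecidableEq ι] [DecidableEq κ] [DecidableEq τ]
    {M : Matrix ((ι ⊕ κ) ⊕ τ) ((ι ⊕ κ) ⊕ τ) K}
    (h : ∀ x y w, M *ᵥ Sum.elim (Sum.elim x y) w = 0 → x = 0 ∧ y = 0 ∧ w = 0) : IsUnit M := by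
  refine mulVec_injective_iff_isUnit.1 ?_
  rw [← coe_mulVecLin, ← LinearMap.ker_eq_bot, ker_mulVecLin_eq_bot_iff]
  intro v hv
  rw [← Sum.elim_comp_inl_inr v, ← Sum.elim_comp_inl_inr (v ∘ Sum.inl)] at hv ⊢
  obtain ⟨hx, hy, hw⟩ := h _ _ _ hv
  rw [hx, hy, hw, Sum.elim_zero_zero, Sum.elim_zero_zero]

/-- Regularity of the C-subdifferential: every element of the C-subdifferential
of the proximally regularized penalized Fischer–Burmeister residual is a
nonsingular matrix. -/
theorem c_subdifferential_nonsingular (n m q : ℕ)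
    (H : Matrix (Fin n) (Fin n) ℝ) (hH : H.PosSemidef)
    (G : Matrix (Fin m) (Fin n) ℝ) (A : Matrix (Fin q) (Fin n) ℝ)
    (σ : ℝ) (hσ : 0 < σ)
    (γ μ : Fin q → ℝ)
    (hγ : ∀ j, 0 ≤ γ j) (hμ : ∀ j, 0 ≤ μ j)
    (hnz : ∀ j, (γ j, μ j) ≠ (0, 0)) :
    IsUnit
      (Matrix.fromBlocks
        (Matrix.fromBlocks (H + σ • (1 : Matrix (Fin n) (Fin n) ℝ)) Gᵀ
          (-G) (σ • (1 : Matrix (Fin m) (Fin m) ℝ)))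
        (Matrix.fromRows Aᵀ (0 : Matrix (Fin m) (Fin q) ℝ))
        (Matrix.fromCols (-(Matrix.diagonal γ * A)) (0 : Matrix (Fin q) (Fin m) ℝ))
        (Matrix.diagonal (μ + σ • γ))) := by
  refine isUnit_of_mulVec_sumElim_eq_zero fun x y w hv => ?_
  simp only [fromBlocks_mulVec, fromRows_mulVec, fromCols_mulVec_sumElim, Sum.elim_comp_inl,
    Sum.elim_comp_inr, ← Sum.elim_add_add, ← Sum.elim_zero_zero, Sum.elim_eq_iff] at hv
  obtain ⟨⟨h₁, h₂⟩, h₃⟩ := hv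
  have hd j : 0 < (μ + σ • γ) j := add_mul_pos_of_ne_zero (hγ j) (hμ j) (hnz j) hσ
  refine eq_zero_of_regularized_kkt (G := G) (A := A) hH hσ hd hγ ?_ ?_ fun j => ?_
  · simpa only [add_mulVec, smul_mulVec, one_mulVec] using h₁
  · rwa [neg_mulVec, smul_mulVec, one_mulVec, zero_mulVec, add_zero, neg_add_eq_zero] at h₂
  · rw [neg_mulVec, ← mulVec_mulVec, zero_mulVec, add_zero, neg_add_eq_zero] at h₃
    simpa only [mulVec_diagonal] using (congrFun h₃ j).symm
end

section
/- (Natural residual is a global error bound for the strongly monotone subproblem VI) Let C ⊆ ℝᴺ be a nonempty closed convex set, M an N×N real matrix, w ∈ ℝᴺ, and m > 0 such that ⟨Md, d⟩ ≥ m‖d‖² for all d ∈ ℝᴺ. Let x* ∈ C be a solution of the variational inequality ⟨Mx* + w, y − x*⟩ ≥ 0 for all y ∈ C. Then there exists τ > 0 such that for every x ∈ ℝᴺ, ‖x − x*‖ ≤ τ·‖x − Π_C(x − (Mx + w))‖, where Π_C denotes the Euclidean (metric) projection onto C. -/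
/-!
Write `r = x - Π_C(x - (Mx + w))` for the natural residual and `d = x - x*`. The variational
characterization of the projection, tested at `x* ∈ C`, added to the variational inequality
tested at `Π_C(x - (Mx + w)) ∈ C`, gives `⟪r - M d, r - d⟫ ≤ 0`. Expanding, strong monotonicity
and Cauchy–Schwarz yield `m‖d‖² ≤ (1 + ‖M‖)‖r‖‖d‖`, so `τ = (1 + ‖M‖) / m` works.
-/

open Matrix

noncomputable def enormV {N : ℕ} (x : Fin N → ℝ) : ℝ :=
  Real.sqrt (x ⬝ᵥ x)

open WithLp
open scoped RealInnerProductSpace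

section InnerProductSpace

variable {E : Type*} [NormedAddCommGroup E] [InnerProductSpace ℝ E]

theorem real_inner_sub_le_zero_of_forall_norm_sub_le {C : Set E} (hC : Convex ℝ C)
    {u z : E} (hz : z ∈ C) (hmin : ∀ c ∈ C, ‖u - z‖ ≤ ‖u - c‖) {c : E} (hc : c ∈ C) :
    ⟪u - z, c - z⟫ ≤ 0 := by
  have : Nonempty C := ⟨⟨z, hz⟩⟩
  have hinf : ‖u - z‖ = ⨅ c : C, ‖u - c‖ :=
    le_antisymm (le_ciInf fun c => hmin c c.2)
      (ciInf_le ⟨0, by rintro _ ⟨c, rfl⟩; exact norm_nonneg _⟩ (⟨z, hz⟩ : C))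
  exact (norm_eq_iInf_iff_real_inner_le_zero hC hz).1 hinf c hc

variable {C : Set E} (A : E →L[ℝ] E) (w : E) {xstar x z : E}

theorem inner_natural_residual_nonpos (hC : Convex ℝ C) (hxstar : xstar ∈ C)
    (hVI : ∀ y ∈ C, 0 ≤ ⟪A xstar + w, y - xstar⟫) (hz : z ∈ C)
    (hzmin : ∀ c ∈ C, ‖x - (A x + w) - z‖ ≤ ‖x - (A x + w) - c‖) :
    ⟪(x - z) - A (x - xstar), (x - z) - (x - xstar)⟫ ≤ 0 := by
  have hproj := real_inner_sub_le_zero_of_forall_norm_sub_le hC hz hzmin hxstar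
  have hVIz := hVI z hz
  have hsplit : (x - z) - A (x - xstar) = (x - (A x + w) - z) + (A xstar + w) := by
    rw [map_sub]; abel
  have hdiff : (x - z) - (x - xstar) = xstar - z := by abel
  have hflip : ⟪A xstar + w, xstar - z⟫ = -⟪A xstar + w, z - xstar⟫ := by
    rw [← inner_neg_right, neg_sub]
  rw [hsplit, hdiff, inner_add_left, hflip]
  linarith

theorem mul_norm_sub_le_natural_residual (hC : Convex ℝ C) {m : ℝ}
    (hA : ∀ d, m * ‖d‖ ^ 2 ≤ ⟪A d, d⟫) (hxstar : xstar ∈ C)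
    (hVI : ∀ y ∈ C, 0 ≤ ⟪A xstar + w, y - xstar⟫) (hz : z ∈ C)
    (hzmin : ∀ c ∈ C, ‖x - (A x + w) - z‖ ≤ ‖x - (A x + w) - c‖) :
    m * ‖x - xstar‖ ≤ (1 + ‖A‖) * ‖x - z‖ := by
  set r := x - z
  set d := x - xstar
  have hkey : ⟪r - A d, r - d⟫ ≤ 0 := inner_natural_residual_nonpos A w hC hxstar hVI hz hzmin
  clear_value r d
  rw [inner_sub_left, inner_sub_right, inner_sub_right, real_inner_self_eq_norm_sq] at hkey
  have hrd : ⟪r, d⟫ ≤ ‖r‖ * ‖d‖ := real_inner_le_norm r d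
  have hAdr : ⟪A d, r⟫ ≤ ‖A‖ * ‖d‖ * ‖r‖ :=
    (real_inner_le_norm _ _).trans (mul_le_mul_of_nonneg_right (A.le_opNorm d) (norm_nonneg r))
  have hquad : m * ‖d‖ ^ 2 ≤ (1 + ‖A‖) * ‖r‖ * ‖d‖ := by
    nlinarith [hA d, real_inner_comm r (A d), sq_nonneg ‖r‖]
  rcases (norm_nonneg d).eq_or_lt with hd0 | hd0
  · rw [← hd0, mul_zero]; positivity
  · nlinarith

end InnerProductSpace

theorem real_inner_toLp_toLp {ι : Type*} [Fintype ι] (x y : ι → ℝ) :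
    ⟪toLp 2 x, toLp 2 y⟫ = x ⬝ᵥ y := by
  rw [EuclideanSpace.inner_toLp_toLp, star_trivial, dotProduct_comm]

theorem enormV_eq_norm {N : ℕ} (x : Fin N → ℝ) : enormV x = ‖toLp 2 x‖ := by
  rw [enormV, ← real_inner_toLp_toLp, real_inner_self_eq_norm_sq, Real.sqrt_sq (norm_nonneg _)]

theorem natural_residual_global_error_bound_general (N : ℕ)
    (C : Set (Fin N → ℝ)) (hCconv : Convex ℝ C)
    (M : Matrix (Fin N) (Fin N) ℝ) (w : Fin N → ℝ)
    (mconst : ℝ) (hm : 0 < mconst)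
    (hstrong : ∀ d : Fin N → ℝ, mconst * (enormV d) ^ 2 ≤ (M.mulVec d) ⬝ᵥ d)
    (xstar : Fin N → ℝ) (hxstar : xstar ∈ C)
    (hVI : ∀ y ∈ C, 0 ≤ (M.mulVec xstar + w) ⬝ᵥ (y - xstar))
    (proj : (Fin N → ℝ) → (Fin N → ℝ))
    (hproj : ∀ x, proj x ∈ C ∧ ∀ c ∈ C, enormV (x - proj x) ≤ enormV (x - c)) :
    ∃ τ > (0:ℝ), ∀ x : Fin N → ℝ,
      enormV (x - xstar) ≤ τ * enormV (x - proj (x - (M.mulVec x + w))) := by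
  set A := toEuclideanCLM (n := Fin N) (𝕜 := ℝ) M
  refine ⟨(1 + ‖A‖) / mconst, by positivity, fun x => ?_⟩
  obtain ⟨hzC, hzmin⟩ := hproj (x - (M *ᵥ x + w))
  have hbound := mul_norm_sub_le_natural_residual A (toLp 2 w) (C := ofLp ⁻¹' C) (m := mconst)
    (x := toLp 2 x) (xstar := toLp 2 xstar) (z := toLp 2 (proj (x - (M *ᵥ x + w))))
    (hCconv.linear_preimage (WithLp.linearEquiv 2 ℝ (Fin N → ℝ)).toLinearMap) ?_ hxstar ?_ hzC ?_
  · rw [enormV_eq_norm, enormV_eq_norm, div_mul_eq_mul_div, le_div_iff₀' hm]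
    simpa only [toLp_sub] using hbound
  · rintro ⟨d⟩
    simpa only [A, toEuclideanCLM_toLp, real_inner_toLp_toLp, ← enormV_eq_norm] using hstrong d
  · rintro ⟨y⟩ hy
    simpa only [A, toEuclideanCLM_toLp, ← toLp_add, ← toLp_sub, real_inner_toLp_toLp]
      using hVI y hy
  · rintro ⟨c⟩ hc
    simpa only [A, toEuclideanCLM_toLp, ← toLp_add, ← toLp_sub, ← enormV_eq_norm]
      using hzmin c hc

/-- The natural residual is a global error bound for a strongly monotone
variational inequality over a nonempty closed convex set: if `proj` is the
Euclidean projection onto `C` and `xstar` solves the VI, then there is `τ > 0`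
with `‖x − x*‖ ≤ τ‖x − Π_C(x − (Mx + w))‖` for all `x`. -/
theorem natural_residual_global_error_bound (N : ℕ)
    (C : Set (Fin N → ℝ)) (hCne : C.Nonempty) (hCclosed : IsClosed C) (hCconv : Convex ℝ C)
    (M : Matrix (Fin N) (Fin N) ℝ) (w : Fin N → ℝ)
    (mconst : ℝ) (hm : 0 < mconst)
    (hstrong : ∀ d : Fin N → ℝ, mconst * (enormV d) ^ 2 ≤ (M.mulVec d) ⬝ᵥ d)
    (xstar : Fin N → ℝ) (hxstar : xstar ∈ C)
    (hVI : ∀ y ∈ C, 0 ≤ (M.mulVec xstar + w) ⬝ᵥ (y - xstar))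
    (proj : (Fin N → ℝ) → (Fin N → ℝ))
    (hproj : ∀ x, proj x ∈ C ∧ ∀ c ∈ C, enormV (x - proj x) ≤ enormV (x - c)) :
    ∃ τ > (0:ℝ), ∀ x : Fin N → ℝ,
      enormV (x - xstar) ≤ τ * enormV (x - proj (x - (M.mulVec x + w))) :=
  natural_residual_global_error_bound_general N C hCconv M w mconst hm hstrong xstar hxstar hVI proj
    hproj
end

section
/- Under the stated proximal-iterate hypotheses, the limit direction satisfies A·δz ≤ 0, G·δz = 0, and δv ≥ 0. -/
/-!
Dividing by `k` sends every convergent sequence to `0`. The condition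
`b - A z_k + σ (v_k - v_{k-1}) ≥ 0` bounds `A z_k` by a convergent sequence, and
`G z_k = h + σ (λ_k - λ_{k-1})` converges, so the limits `A δz` of `A z_k / k` and `G δz` of
`G z_k / k` are `≤ 0` and `= 0`; `δv ≥ 0` is inherited from `v_k ≥ 0`.
-/

open Matrix Filter Topology

section AsymptoticDirection

variable {E : Type*} [NormedAddCommGroup E] [NormedSpace ℝ E]

lemma tendsto_inv_succ_smul_succ {x : ℕ → E} {d : E}
    (hx : Tendsto (fun k : ℕ => (1 / (k : ℝ)) • x k) atTop (𝓝 d)) :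
    Tendsto (fun k : ℕ => ((k : ℝ) + 1)⁻¹ • x (k + 1)) atTop (𝓝 d) := by
  simpa [Function.comp_def] using hx.comp (tendsto_add_atTop_nat 1)

lemma tendsto_inv_succ_smul_zero_of_tendsto {w : ℕ → E} {c : E}
    (hw : Tendsto w atTop (𝓝 c)) :
    Tendsto (fun k : ℕ => ((k : ℝ) + 1)⁻¹ • w k) atTop (𝓝 0) := by
  simpa using (tendsto_one_div_add_atTop_nhds_zero_nat (𝕜 := ℝ)).smul hw

lemma eq_zero_of_tendsto_inv_succ_smul_of_tendsto {x : ℕ → E} {d c : E}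
    (hx : Tendsto (fun k : ℕ => ((k : ℝ) + 1)⁻¹ • x k) atTop (𝓝 d))
    (hc : Tendsto x atTop (𝓝 c)) : d = 0 :=
  tendsto_nhds_unique hx (tendsto_inv_succ_smul_zero_of_tendsto hc)

variable [PartialOrder E] [OrderClosedTopology E] [PosSMulMono ℝ E]

lemma nonpos_of_tendsto_inv_succ_smul_of_le {x w : ℕ → E} {d c : E}
    (hx : Tendsto (fun k : ℕ => ((k : ℝ) + 1)⁻¹ • x k) atTop (𝓝 d))
    (hw : Tendsto w atTop (𝓝 c)) (hle : ∀ k, x k ≤ w k) : d ≤ 0 :=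
  le_of_tendsto_of_tendsto' hx (tendsto_inv_succ_smul_zero_of_tendsto hw) fun k =>
    smul_le_smul_of_nonneg_left (hle k) (by positivity)

lemma nonneg_of_tendsto_inv_succ_smul {x : ℕ → E} {d : E}
    (hx : Tendsto (fun k : ℕ => ((k : ℝ) + 1)⁻¹ • x k) atTop (𝓝 d)) (hnonneg : ∀ k, 0 ≤ x k) :
    0 ≤ d :=
  ge_of_tendsto' hx fun k => smul_nonneg (by positivity) (hnonneg k)

end AsymptoticDirection

lemma Matrix.tendsto_inv_succ_smul_mulVec {n p : ℕ} (M : Matrix (Fin p) (Fin n) ℝ)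
    {x : ℕ → Fin n → ℝ} {d : Fin n → ℝ}
    (hx : Tendsto (fun k : ℕ => ((k : ℝ) + 1)⁻¹ • x k) atTop (𝓝 d)) :
    Tendsto (fun k : ℕ => ((k : ℝ) + 1)⁻¹ • M *ᵥ x k) atTop (𝓝 (M *ᵥ d)) := by
  simpa [Function.comp_def, mulVec_smul] using
    ((continuous_const.matrix_mulVec continuous_id).tendsto d).comp hx

theorem prox_limit_direction_cone_properties_general (n m q : ℕ)
    (G : Matrix (Fin m) (Fin n) ℝ) (h : Fin m → ℝ)
    (A : Matrix (Fin q) (Fin n) ℝ) (b : Fin q → ℝ)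
    (σ : ℝ)
    (z : ℕ → Fin n → ℝ) (lam : ℕ → Fin m → ℝ) (v : ℕ → Fin q → ℝ)
    (heq2 : ∀ k : ℕ, h - G.mulVec (z (k + 1)) + σ • (lam (k + 1) - lam k) = 0)
    (heq4 : ∀ k : ℕ, 0 ≤ v (k + 1))
    (heq5 : ∀ k : ℕ, 0 ≤ b - A.mulVec (z (k + 1)) + σ • (v (k + 1) - v k))
    (δz : Fin n → ℝ) (δlam : Fin m → ℝ) (δv : Fin q → ℝ)
    (hd2 : Tendsto (fun k => lam (k + 1) - lam k) atTop (𝓝 δlam))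
    (hd3 : Tendsto (fun k => v (k + 1) - v k) atTop (𝓝 δv))
    (ha1 : Tendsto (fun k : ℕ => (1 / (k : ℝ)) • z k) atTop (𝓝 δz))
    (ha3 : Tendsto (fun k : ℕ => (1 / (k : ℝ)) • v k) atTop (𝓝 δv)) :
    A.mulVec δz ≤ 0 ∧ G.mulVec δz = 0 ∧ 0 ≤ δv := by
  have hz := tendsto_inv_succ_smul_succ ha1
  refine ⟨?_, ?_, nonneg_of_tendsto_inv_succ_smul (tendsto_inv_succ_smul_succ ha3) heq4⟩
  · have hAz : ∀ k, A *ᵥ z (k + 1) ≤ b + σ • (v (k + 1) - v k) := fun k =>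
      sub_nonneg.mp (sub_add_eq_add_sub b _ _ ▸ heq5 k)
    exact nonpos_of_tendsto_inv_succ_smul_of_le (A.tendsto_inv_succ_smul_mulVec hz)
      (tendsto_const_nhds.add (hd3.const_smul σ)) hAz
  · have hGz : ∀ k, G *ᵥ z (k + 1) = h + σ • (lam (k + 1) - lam k) := fun k =>
      (sub_eq_zero.mp (sub_add_eq_add_sub h _ _ ▸ heq2 k)).symm
    refine eq_zero_of_tendsto_inv_succ_smul_of_tendsto (G.tendsto_inv_succ_smul_mulVec hz)
      (c := h + σ • δlam) ?_
    simpa only [hGz] using tendsto_const_nhds.add (hd2.const_smul σ)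

/-- Under the proximal-iterate hypotheses, the limit direction satisfies
`A·δz ≤ 0`, `G·δz = 0`, and `δv ≥ 0`. -/
theorem prox_limit_direction_cone_properties (n m q : ℕ)
    (H : Matrix (Fin n) (Fin n) ℝ) (hH : H.PosSemidef)
    (f : Fin n → ℝ) (G : Matrix (Fin m) (Fin n) ℝ) (h : Fin m → ℝ)
    (A : Matrix (Fin q) (Fin n) ℝ) (b : Fin q → ℝ)
    (σ : ℝ) (hσ : 0 < σ)
    (z : ℕ → Fin n → ℝ) (lam : ℕ → Fin m → ℝ) (v : ℕ → Fin q → ℝ)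
    (heq1 : ∀ k : ℕ, H.mulVec (z (k + 1)) + f + Gᵀ.mulVec (lam (k + 1)) +
      Aᵀ.mulVec (v (k + 1)) + σ • (z (k + 1) - z k) = 0)
    (heq2 : ∀ k : ℕ, h - G.mulVec (z (k + 1)) + σ • (lam (k + 1) - lam k) = 0)
    (heq3 : ∀ k : ℕ, (b - A.mulVec (z (k + 1)) + σ • (v (k + 1) - v k)) ⬝ᵥ v (k + 1) = 0)
    (heq4 : ∀ k : ℕ, 0 ≤ v (k + 1))
    (heq5 : ∀ k : ℕ, 0 ≤ b - A.mulVec (z (k + 1)) + σ • (v (k + 1) - v k))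
    (δz : Fin n → ℝ) (δlam : Fin m → ℝ) (δv : Fin q → ℝ)
    (hd1 : Tendsto (fun k => z (k + 1) - z k) atTop (𝓝 δz))
    (hd2 : Tendsto (fun k => lam (k + 1) - lam k) atTop (𝓝 δlam))
    (hd3 : Tendsto (fun k => v (k + 1) - v k) atTop (𝓝 δv))
    (ha1 : Tendsto (fun k : ℕ => (1 / (k : ℝ)) • z k) atTop (𝓝 δz))
    (ha2 : Tendsto (fun k : ℕ => (1 / (k : ℝ)) • lam k) atTop (𝓝 δlam))
    (ha3 : Tendsto (fun k : ℕ => (1 / (k : ℝ)) • v k) atTop (𝓝 δv)) :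
    A.mulVec δz ≤ 0 ∧ G.mulVec δz = 0 ∧ 0 ≤ δv :=
  prox_limit_direction_cone_properties_general n m q G h A b σ z lam v heq2 heq4 heq5 δz δlam δv hd2
    hd3 ha1 ha3
end

section
/- Under the stated proximal-iterate hypotheses, the limit direction satisfies H·δz = 0. -/
/-!
Divide the three optimality relations of the `k`-th proximal step by `k` (by `k²` for the
complementarity relation) and let `k → ∞`. Constants and the convergent increments
`x_{k+1} - x_k` disappear in the limit, leaving `H δz + Gᵀ δλ + Aᵀ δv = 0`, `G δz = 0` and
`⟪A δz, δv⟫ = 0`. Pairing the first relation with `δz` gives `⟪δz, H δz⟫ = 0`, and a positive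
semidefinite `H` then kills `δz`.
-/

open Matrix Filter Topology

section AsymptoticDirection

variable {E : Type*} [NormedAddCommGroup E] [NormedSpace ℝ E]

def HasAsymptoticDirection (x : ℕ → E) (d : E) : Prop :=
  Tendsto (fun k : ℕ => (1 / (k : ℝ)) • x k) atTop (𝓝 d)

variable {x y : ℕ → E} {d e c : E}

theorem Filter.Tendsto.hasAsymptoticDirection_zero (hx : Tendsto x atTop (𝓝 c)) :
    HasAsymptoticDirection x 0 := by
  have hlim := (tendsto_one_div_atTop_nhds_zero_nat (𝕜 := ℝ)).smul hx
  rwa [zero_smul] at hlim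

namespace HasAsymptoticDirection

theorem add (hx : HasAsymptoticDirection x d) (hy : HasAsymptoticDirection y e) :
    HasAsymptoticDirection (fun k => x k + y k) (d + e) := by
  simpa only [HasAsymptoticDirection, smul_add] using Tendsto.add hx hy

theorem sub (hx : HasAsymptoticDirection x d) (hy : HasAsymptoticDirection y e) :
    HasAsymptoticDirection (fun k => x k - y k) (d - e) := by
  simpa only [HasAsymptoticDirection, smul_sub] using Tendsto.sub hx hy

theorem comp_add_one (hx : HasAsymptoticDirection x d) :
    HasAsymptoticDirection (fun k => x (k + 1)) d := by
  have hratio : Tendsto (fun k : ℕ => 1 + 1 / (k : ℝ)) atTop (𝓝 1) := by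
    simpa using tendsto_one_div_atTop_nhds_zero_nat.const_add (1 : ℝ)
  have hshift : Tendsto (fun k : ℕ => (1 / ((k + 1 : ℕ) : ℝ)) • x (k + 1)) atTop (𝓝 d) :=
    hx.comp (tendsto_add_atTop_nat 1)
  refine (one_smul ℝ d ▸ hratio.smul hshift).congr' ?_
  filter_upwards [eventually_ne_atTop 0] with k hk
  rw [smul_smul]
  congr 1
  push_cast
  field_simp

theorem eq_zero_of_forall_eq_zero (hx : HasAsymptoticDirection x d) (h : ∀ k, x k = 0) :
    d = 0 := by
  refine tendsto_nhds_unique hx ?_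
  simpa only [h, smul_zero] using tendsto_const_nhds

end HasAsymptoticDirection

end AsymptoticDirection

namespace HasAsymptoticDirection

variable {ι κ : Type*} [Fintype ι] [Fintype κ] {x : ℕ → ι → ℝ} {d : ι → ℝ}

theorem mulVec (hx : HasAsymptoticDirection x d) (M : Matrix κ ι ℝ) :
    HasAsymptoticDirection (fun k => M *ᵥ x k) (M *ᵥ d) := by
  have hM : Continuous (M *ᵥ ·) := continuous_const.matrix_mulVec continuous_id
  simpa only [HasAsymptoticDirection, Function.comp_def, mulVec_smul] using (hM.tendsto d).comp hx

theorem dotProduct_eq_zero {y : ℕ → ι → ℝ} {e : ι → ℝ} (hx : HasAsymptoticDirection x d)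
    (hy : HasAsymptoticDirection y e) (h : ∀ k, x k ⬝ᵥ y k = 0) : d ⬝ᵥ e = 0 := by
  have hdot : Continuous fun p : (ι → ℝ) × (ι → ℝ) => p.1 ⬝ᵥ p.2 :=
    continuous_fst.dotProduct continuous_snd
  have hprod := (hdot.tendsto (d, e)).comp (hx.prodMk_nhds hy)
  refine tendsto_nhds_unique hprod ?_
  simpa only [Function.comp_def, smul_dotProduct, dotProduct_smul, h, smul_zero] using
    tendsto_const_nhds

end HasAsymptoticDirection

theorem Matrix.PosSemidef.mulVec_eq_zero_of_stationarity {ι μ κ : Type*} [Fintype ι] [Fintype μ]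
    [Fintype κ] {H : Matrix ι ι ℝ} (hH : H.PosSemidef) {G : Matrix μ ι ℝ} {A : Matrix κ ι ℝ}
    {x : ι → ℝ} {l : μ → ℝ} {w : κ → ℝ} (hstat : H *ᵥ x + Gᵀ *ᵥ l + Aᵀ *ᵥ w = 0)
    (hG : G *ᵥ x = 0) (hA : A *ᵥ x ⬝ᵥ w = 0) : H *ᵥ x = 0 := by
  have hpair := congrArg (x ⬝ᵥ ·) hstat
  simp only [dotProduct_add, dotProduct_mulVec x Gᵀ, dotProduct_mulVec x Aᵀ, vecMul_transpose,
    hG, hA, zero_dotProduct, dotProduct_zero, add_zero] at hpair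
  exact (hH.dotProduct_mulVec_zero_iff x).mp (by simpa using hpair)

theorem prox_limit_direction_hessian_kernel_general (n m q : ℕ)
    (H : Matrix (Fin n) (Fin n) ℝ) (hH : H.PosSemidef)
    (f : Fin n → ℝ) (G : Matrix (Fin m) (Fin n) ℝ) (h : Fin m → ℝ)
    (A : Matrix (Fin q) (Fin n) ℝ) (b : Fin q → ℝ)
    (σ : ℝ)
    (z : ℕ → Fin n → ℝ) (lam : ℕ → Fin m → ℝ) (v : ℕ → Fin q → ℝ)
    (heq1 : ∀ k : ℕ, H.mulVec (z (k + 1)) + f + Gᵀ.mulVec (lam (k + 1)) +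
      Aᵀ.mulVec (v (k + 1)) + σ • (z (k + 1) - z k) = 0)
    (heq2 : ∀ k : ℕ, h - G.mulVec (z (k + 1)) + σ • (lam (k + 1) - lam k) = 0)
    (heq3 : ∀ k : ℕ, (b - A.mulVec (z (k + 1)) + σ • (v (k + 1) - v k)) ⬝ᵥ v (k + 1) = 0)
    (δz : Fin n → ℝ) (δlam : Fin m → ℝ) (δv : Fin q → ℝ)
    (hd1 : Tendsto (fun k => z (k + 1) - z k) atTop (𝓝 δz))
    (hd2 : Tendsto (fun k => lam (k + 1) - lam k) atTop (𝓝 δlam))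
    (hd3 : Tendsto (fun k => v (k + 1) - v k) atTop (𝓝 δv))
    (ha1 : Tendsto (fun k : ℕ => (1 / (k : ℝ)) • z k) atTop (𝓝 δz))
    (ha2 : Tendsto (fun k : ℕ => (1 / (k : ℝ)) • lam k) atTop (𝓝 δlam))
    (ha3 : Tendsto (fun k : ℕ => (1 / (k : ℝ)) • v k) atTop (𝓝 δv)) :
    H.mulVec δz = 0 := by
  have hz := HasAsymptoticDirection.comp_add_one ha1
  have hlam := HasAsymptoticDirection.comp_add_one ha2
  have hv := HasAsymptoticDirection.comp_add_one ha3
  have hstat : H *ᵥ δz + Gᵀ *ᵥ δlam + Aᵀ *ᵥ δv = 0 := by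
    have hlim := ((((hz.mulVec H).add (tendsto_const_nhds (x := f)).hasAsymptoticDirection_zero).add
      (hlam.mulVec Gᵀ)).add (hv.mulVec Aᵀ)).add (hd1.const_smul σ).hasAsymptoticDirection_zero
    simpa using hlim.eq_zero_of_forall_eq_zero heq1
  have hG : G *ᵥ δz = 0 := by
    have hlim := ((tendsto_const_nhds (x := h)).hasAsymptoticDirection_zero.sub
      (hz.mulVec G)).add (hd2.const_smul σ).hasAsymptoticDirection_zero
    simpa using hlim.eq_zero_of_forall_eq_zero heq2
  have hA : A *ᵥ δz ⬝ᵥ δv = 0 := by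
    have hlim := ((tendsto_const_nhds (x := b)).hasAsymptoticDirection_zero.sub
      (hz.mulVec A)).add (hd3.const_smul σ).hasAsymptoticDirection_zero
    simpa using hlim.dotProduct_eq_zero hv heq3
  exact hH.mulVec_eq_zero_of_stationarity hstat hG hA

/-- Under the proximal-iterate hypotheses, the limit direction satisfies `H·δz = 0`. -/
theorem prox_limit_direction_hessian_kernel (n m q : ℕ)
    (H : Matrix (Fin n) (Fin n) ℝ) (hH : H.PosSemidef)
    (f : Fin n → ℝ) (G : Matrix (Fin m) (Fin n) ℝ) (h : Fin m → ℝ)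
    (A : Matrix (Fin q) (Fin n) ℝ) (b : Fin q → ℝ)
    (σ : ℝ) (hσ : 0 < σ)
    (z : ℕ → Fin n → ℝ) (lam : ℕ → Fin m → ℝ) (v : ℕ → Fin q → ℝ)
    (heq1 : ∀ k : ℕ, H.mulVec (z (k + 1)) + f + Gᵀ.mulVec (lam (k + 1)) +
      Aᵀ.mulVec (v (k + 1)) + σ • (z (k + 1) - z k) = 0)
    (heq2 : ∀ k : ℕ, h - G.mulVec (z (k + 1)) + σ • (lam (k + 1) - lam k) = 0)
    (heq3 : ∀ k : ℕ, (b - A.mulVec (z (k + 1)) + σ • (v (k + 1) - v k)) ⬝ᵥ v (k + 1) = 0)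
    (heq4 : ∀ k : ℕ, 0 ≤ v (k + 1))
    (heq5 : ∀ k : ℕ, 0 ≤ b - A.mulVec (z (k + 1)) + σ • (v (k + 1) - v k))
    (δz : Fin n → ℝ) (δlam : Fin m → ℝ) (δv : Fin q → ℝ)
    (hd1 : Tendsto (fun k => z (k + 1) - z k) atTop (𝓝 δz))
    (hd2 : Tendsto (fun k => lam (k + 1) - lam k) atTop (𝓝 δlam))
    (hd3 : Tendsto (fun k => v (k + 1) - v k) atTop (𝓝 δv))
    (ha1 : Tendsto (fun k : ℕ => (1 / (k : ℝ)) • z k) atTop (𝓝 δz))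
    (ha2 : Tendsto (fun k : ℕ => (1 / (k : ℝ)) • lam k) atTop (𝓝 δlam))
    (ha3 : Tendsto (fun k : ℕ => (1 / (k : ℝ)) • v k) atTop (𝓝 δv)) :
    H.mulVec δz = 0 :=
  prox_limit_direction_hessian_kernel_general n m q H hH f G h A b σ z lam v heq1 heq2 heq3 δz δlam
    δv hd1 hd2 hd3 ha1 ha2 ha3
end

section
/- Under the stated proximal-iterate hypotheses, the limit direction satisfies fᵀδz = −σ‖δz‖₂², and in particular fᵀδz ≤ 0. -/
open Matrix Filter Topology

/-!
Subtracting consecutive optimality conditions and passing to the limit gives `G δz = 0` and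
`H δz + Gᵀ δλ + Aᵀ δv = 0`. The slack `b - A z_k + σ Δv_k` grows like `-k A δz`, so wherever
`(A δz)_i ≠ 0` it is eventually nonzero and complementarity forces `(v_k)_i = 0`; hence
`v_k ⬝ A δz = 0` for large `k`, and therefore `δv ⬝ A δz = 0`. Pairing the stationarity of the
direction with `δz` then gives `δzᵀ H δz = 0`, i.e. `H δz = 0`, and pairing the `k`-th
stationarity condition with `δz` leaves `f ⬝ δz + σ Δz_k ⬝ δz = 0` for large `k`, whose limit is
the claim.
-/

theorem Filter.Tendsto.const_mulVec {α m n R : Type*} [Fintype n] [NonUnitalNonAssocSemiring R]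
    [TopologicalSpace R] [IsTopologicalSemiring R] {l : Filter α} {x : α → n → R} {a : n → R}
    (M : Matrix m n R) (hx : Tendsto x l (𝓝 a)) : Tendsto (fun k => M *ᵥ x k) l (𝓝 (M *ᵥ a)) :=
  ((continuous_const.matrix_mulVec continuous_id).tendsto a).comp hx

theorem Filter.Tendsto.succ_sub_nhds_zero {E : Type*} [AddCommGroup E] [TopologicalSpace E]
    [IsTopologicalAddGroup E] {u : ℕ → E} {a : E} (hu : Tendsto u atTop (𝓝 a)) :
    Tendsto (fun k => u (k + 1) - u k) atTop (𝓝 0) := by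
  simpa using (hu.comp (tendsto_add_atTop_nat 1)).sub hu

theorem Filter.Tendsto.dotProduct_const {α n R : Type*} [Fintype n] [Mul R] [AddCommMonoid R]
    [TopologicalSpace R] [ContinuousAdd R] [ContinuousMul R] {l : Filter α} {x : α → n → R}
    {a : n → R} (hx : Tendsto x l (𝓝 a)) (w : n → R) :
    Tendsto (fun k => x k ⬝ᵥ w) l (𝓝 (a ⬝ᵥ w)) :=
  ((continuous_id.dotProduct continuous_const).tendsto a).comp hx

theorem eq_zero_of_tendsto_of_eq_smul_succ_sub {E : Type*} [AddCommGroup E] [TopologicalSpace E]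
    [IsTopologicalAddGroup E] [T2Space E] [Module ℝ E] [ContinuousConstSMul ℝ E]
    {u w : ℕ → E} {a b : E} (σ : ℝ)
    (hu : Tendsto u atTop (𝓝 a)) (hw : Tendsto w atTop (𝓝 b))
    (h : ∀ k, u k = σ • (w (k + 1) - w k)) : a = 0 := by
  refine tendsto_nhds_unique hu ?_
  simpa [funext h] using hw.succ_sub_nhds_zero.const_smul σ

theorem Matrix.transpose_mulVec_dotProduct {m n R : Type*} [Fintype m] [Fintype n]
    [CommSemiring R]
    (M : Matrix m n R) (y : m → R) (x : n → R) : Mᵀ *ᵥ y ⬝ᵥ x = y ⬝ᵥ M *ᵥ x := by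
  rw [dotProduct_comm, dotProduct_transpose_mulVec]

theorem mul_eq_zero_of_nonneg_of_dotProduct_eq_zero {ι R : Type*} [Fintype ι] [Semiring R]
    [PartialOrder R] [IsOrderedRing R] {a b : ι → R} (ha : 0 ≤ a) (hb : 0 ≤ b)
    (h : a ⬝ᵥ b = 0) (i : ι) : a i * b i = 0 :=
  congrFun ((Fintype.sum_eq_zero_iff_of_nonneg fun j => mul_nonneg (ha j) (hb j)).1 h) i

theorem eventually_dotProduct_eq_zero_of_tendsto_smul {α ι R : Type*} [Fintype ι]
    [NonUnitalNonAssocSemiring R] [NoZeroDivisors R] [TopologicalSpace R] [T1Space R]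
    {l : Filter α} {c : α → R} {s v : α → ι → R} {w : ι → R}
    (hs : Tendsto (fun k => c k • s k) l (𝓝 w)) (hsv : ∀ k i, s k i * v k i = 0) :
    ∀ᶠ k in l, v k ⬝ᵥ w = 0 := by
  have hcoord : ∀ i, ∀ᶠ k in l, v k i * w i = 0 := by
    intro i
    by_cases hw : w i = 0
    · simp [hw]
    filter_upwards [(tendsto_pi_nhds.1 hs i).eventually_ne hw] with k hk
    have hs0 : s k i ≠ 0 := right_ne_zero_of_mul hk
    rw [(mul_eq_zero.1 (hsv k i)).resolve_left hs0, zero_mul]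
  filter_upwards [eventually_all.2 hcoord] with k hk
  exact Finset.sum_eq_zero fun i _ => hk i

theorem dotProduct_eq_zero_of_tendsto_succ_sub {ι : Type*} [Fintype ι] {x : ℕ → ι → ℝ}
    {d w : ι → ℝ} (hx : Tendsto (fun k => x (k + 1) - x k) atTop (𝓝 d))
    (h : ∀ᶠ k in atTop, x (k + 1) ⬝ᵥ w = 0) : d ⬝ᵥ w = 0 := by
  refine tendsto_nhds_unique ((hx.comp (tendsto_add_atTop_nat 1)).dotProduct_const w)
    (tendsto_const_nhds.congr' ?_)
  filter_upwards [h, (tendsto_add_atTop_nat 1).eventually h] with k h₀ h₁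
  simp only [Function.comp, sub_dotProduct, h₀, h₁, sub_zero]

section ProximalIterates

variable {n m q : Type*} [Fintype n] {σ : ℝ}
  {z : ℕ → n → ℝ} {lam : ℕ → m → ℝ} {v : ℕ → q → ℝ} {δz : n → ℝ} {δlam : m → ℝ} {δv : q → ℝ}

theorem prox_mulVec_direction_eq_zero {G : Matrix m n ℝ} {h : m → ℝ}
    (heq : ∀ k, h - G *ᵥ z (k + 1) + σ • (lam (k + 1) - lam k) = 0)
    (hdz : Tendsto (fun k => z (k + 1) - z k) atTop (𝓝 δz))
    (hdlam : Tendsto (fun k => lam (k + 1) - lam k) atTop (𝓝 δlam)) : G *ᵥ δz = 0 :=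
  eq_zero_of_tendsto_of_eq_smul_succ_sub σ ((hdz.comp (tendsto_add_atTop_nat 1)).const_mulVec G)
    hdlam fun k => by
      simp only [Function.comp, mulVec_sub]
      linear_combination (norm := module) heq k - heq (k + 1)

theorem prox_direction_stationary [Fintype m] [Fintype q] {H : Matrix n n ℝ} {f : n → ℝ}
    {G : Matrix m n ℝ} {A : Matrix q n ℝ}
    (heq : ∀ k, H *ᵥ z (k + 1) + f + Gᵀ *ᵥ lam (k + 1) + Aᵀ *ᵥ v (k + 1) +
      σ • (z (k + 1) - z k) = 0)
    (hdz : Tendsto (fun k => z (k + 1) - z k) atTop (𝓝 δz))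
    (hdlam : Tendsto (fun k => lam (k + 1) - lam k) atTop (𝓝 δlam))
    (hdv : Tendsto (fun k => v (k + 1) - v k) atTop (𝓝 δv)) :
    H *ᵥ δz + Gᵀ *ᵥ δlam + Aᵀ *ᵥ δv = 0 := by
  have hshift := tendsto_add_atTop_nat 1
  have hlim := (((hdz.comp hshift).const_mulVec H).add ((hdlam.comp hshift).const_mulVec Gᵀ)).add
    ((hdv.comp hshift).const_mulVec Aᵀ)
  refine neg_eq_zero.1 (eq_zero_of_tendsto_of_eq_smul_succ_sub σ hlim.neg hdz fun k => ?_)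
  simp only [Function.comp, mulVec_sub]
  linear_combination (norm := module) heq k - heq (k + 1)

theorem prox_tendsto_scaled_slack {A : Matrix q n ℝ} {b : q → ℝ}
    (hz : Tendsto (fun k : ℕ => (1 / (k : ℝ)) • z k) atTop (𝓝 δz))
    (hdv : Tendsto (fun k => v (k + 1) - v k) atTop (𝓝 δv)) :
    Tendsto (fun k : ℕ => (1 / ((k + 1 : ℕ) : ℝ)) • (b - A *ᵥ z (k + 1) + σ • (v (k + 1) - v k)))
      atTop (𝓝 (-(A *ᵥ δz))) := by
  have hc : Tendsto (fun k : ℕ => 1 / ((k + 1 : ℕ) : ℝ)) atTop (𝓝 0) :=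
    tendsto_one_div_atTop_nhds_zero_nat.comp (tendsto_add_atTop_nat 1)
  have hAz := (hz.comp (tendsto_add_atTop_nat 1)).const_mulVec A
  simpa [smul_add, smul_sub, mulVec_smul] using
    ((hc.smul_const b).sub hAz).add (hc.smul (hdv.const_smul σ))

end ProximalIterates

theorem prox_limit_direction_objective_descent_general (n m q : ℕ)
    (H : Matrix (Fin n) (Fin n) ℝ) (hH : H.PosSemidef)
    (f : Fin n → ℝ) (G : Matrix (Fin m) (Fin n) ℝ) (h : Fin m → ℝ)
    (A : Matrix (Fin q) (Fin n) ℝ) (b : Fin q → ℝ)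
    (σ : ℝ) (hσ : 0 < σ)
    (z : ℕ → Fin n → ℝ) (lam : ℕ → Fin m → ℝ) (v : ℕ → Fin q → ℝ)
    (heq1 : ∀ k : ℕ, H.mulVec (z (k + 1)) + f + Gᵀ.mulVec (lam (k + 1)) +
      Aᵀ.mulVec (v (k + 1)) + σ • (z (k + 1) - z k) = 0)
    (heq2 : ∀ k : ℕ, h - G.mulVec (z (k + 1)) + σ • (lam (k + 1) - lam k) = 0)
    (heq3 : ∀ k : ℕ, (b - A.mulVec (z (k + 1)) + σ • (v (k + 1) - v k)) ⬝ᵥ v (k + 1) = 0)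
    (heq4 : ∀ k : ℕ, 0 ≤ v (k + 1))
    (heq5 : ∀ k : ℕ, 0 ≤ b - A.mulVec (z (k + 1)) + σ • (v (k + 1) - v k))
    (δz : Fin n → ℝ) (δlam : Fin m → ℝ) (δv : Fin q → ℝ)
    (hd1 : Tendsto (fun k => z (k + 1) - z k) atTop (𝓝 δz))
    (hd2 : Tendsto (fun k => lam (k + 1) - lam k) atTop (𝓝 δlam))
    (hd3 : Tendsto (fun k => v (k + 1) - v k) atTop (𝓝 δv))
    (ha1 : Tendsto (fun k : ℕ => (1 / (k : ℝ)) • z k) atTop (𝓝 δz)) :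
    f ⬝ᵥ δz = -σ * (δz ⬝ᵥ δz) ∧ f ⬝ᵥ δz ≤ 0 := by
  have hGz : G *ᵥ δz = 0 := prox_mulVec_direction_eq_zero heq2 hd1 hd2
  have hcompl : ∀ᶠ k in atTop, v (k + 1) ⬝ᵥ A *ᵥ δz = 0 := by
    simpa only [dotProduct_neg, neg_eq_zero] using
      eventually_dotProduct_eq_zero_of_tendsto_smul (prox_tendsto_scaled_slack (b := b) ha1 hd3)
        fun k => mul_eq_zero_of_nonneg_of_dotProduct_eq_zero (heq5 k) (heq4 k) (heq3 k)
  have hAv : δv ⬝ᵥ A *ᵥ δz = 0 := dotProduct_eq_zero_of_tendsto_succ_sub hd3 hcompl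
  have hHz : H *ᵥ δz = 0 := by
    refine (hH.dotProduct_mulVec_zero_iff δz).1 ?_
    simpa only [dotProduct_add, dotProduct_transpose_mulVec, hGz, hAv, dotProduct_zero, add_zero,
      star_trivial] using congrArg (δz ⬝ᵥ ·) (prox_direction_stationary heq1 hd1 hd2 hd3)
  have hHsymm : Hᵀ = H := (isHermitian_iff_isSymm.1 hH.1).eq
  have hdesc : ∀ᶠ k in atTop, f ⬝ᵥ δz + σ * ((z (k + 1) - z k) ⬝ᵥ δz) = 0 := by
    filter_upwards [hcompl] with k hk
    have hdot := congrArg (· ⬝ᵥ δz) (heq1 k)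
    rw [← hHsymm] at hdot
    simpa only [add_dotProduct, smul_dotProduct, smul_eq_mul, zero_dotProduct,
      transpose_mulVec_dotProduct, hHz, hGz, hk, dotProduct_zero, zero_add, add_zero]
      using hdot
  have hlimit : f ⬝ᵥ δz + σ * (δz ⬝ᵥ δz) = 0 :=
    tendsto_nhds_unique (tendsto_const_nhds.add ((hd1.dotProduct_const δz).const_mul σ))
      (tendsto_const_nhds.congr' (EventuallyEq.symm hdesc))
  have hsq : 0 ≤ δz ⬝ᵥ δz := Finset.sum_nonneg fun i _ => mul_self_nonneg (δz i)
  exact ⟨by linarith, by nlinarith⟩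

/-- Under the proximal-iterate hypotheses, `fᵀδz = −σ‖δz‖₂²`, and in
particular `fᵀδz ≤ 0`. -/
theorem prox_limit_direction_objective_descent (n m q : ℕ)
    (H : Matrix (Fin n) (Fin n) ℝ) (hH : H.PosSemidef)
    (f : Fin n → ℝ) (G : Matrix (Fin m) (Fin n) ℝ) (h : Fin m → ℝ)
    (A : Matrix (Fin q) (Fin n) ℝ) (b : Fin q → ℝ)
    (σ : ℝ) (hσ : 0 < σ)
    (z : ℕ → Fin n → ℝ) (lam : ℕ → Fin m → ℝ) (v : ℕ → Fin q → ℝ)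
    (heq1 : ∀ k : ℕ, H.mulVec (z (k + 1)) + f + Gᵀ.mulVec (lam (k + 1)) +
      Aᵀ.mulVec (v (k + 1)) + σ • (z (k + 1) - z k) = 0)
    (heq2 : ∀ k : ℕ, h - G.mulVec (z (k + 1)) + σ • (lam (k + 1) - lam k) = 0)
    (heq3 : ∀ k : ℕ, (b - A.mulVec (z (k + 1)) + σ • (v (k + 1) - v k)) ⬝ᵥ v (k + 1) = 0)
    (heq4 : ∀ k : ℕ, 0 ≤ v (k + 1))
    (heq5 : ∀ k : ℕ, 0 ≤ b - A.mulVec (z (k + 1)) + σ • (v (k + 1) - v k))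
    (δz : Fin n → ℝ) (δlam : Fin m → ℝ) (δv : Fin q → ℝ)
    (hd1 : Tendsto (fun k => z (k + 1) - z k) atTop (𝓝 δz))
    (hd2 : Tendsto (fun k => lam (k + 1) - lam k) atTop (𝓝 δlam))
    (hd3 : Tendsto (fun k => v (k + 1) - v k) atTop (𝓝 δv))
    (ha1 : Tendsto (fun k : ℕ => (1 / (k : ℝ)) • z k) atTop (𝓝 δz))
    (ha2 : Tendsto (fun k : ℕ => (1 / (k : ℝ)) • lam k) atTop (𝓝 δlam))
    (ha3 : Tendsto (fun k : ℕ => (1 / (k : ℝ)) • v k) atTop (𝓝 δv)) :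
    f ⬝ᵥ δz = -σ * (δz ⬝ᵥ δz) ∧ f ⬝ᵥ δz ≤ 0 :=
  prox_limit_direction_objective_descent_general n m q H hH f G h A b σ hσ z lam v heq1 heq2 heq3
    heq4 heq5 δz δlam δv hd1 hd2 hd3 ha1
end

section
/- Under the stated proximal-iterate hypotheses, the limit direction satisfies Gᵀδλ + Aᵀδv = 0. -/
/-!
Divide each of the three optimality relations at step `k + 1` by `k` (the complementarity
relation by `k²`) and let `k → ∞`: since `x_k / k → δx`, also `x_{k+1} / k → δx` and
`(x_{k+1} - x_k) / k → 0`, so the recession relations `Hδz + Gᵀδλ + Aᵀδv = 0`, `Gδz = 0` and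
`⟪Aδz, δv⟫ = 0` hold. Pairing the first with `δz` gives `⟪δz, Hδz⟫ = 0`, hence `Hδz = 0` because
`H` is positive semidefinite.
-/

open Matrix Filter Topology

section OneDivSmul

variable {E : Type*} [AddCommGroup E] [Module ℝ E] [TopologicalSpace E]
  [ContinuousSMul ℝ E] {x : ℕ → E} {a : E}

theorem tendsto_one_div_smul_const (c : E) :
    Tendsto (fun k : ℕ => (1 / (k : ℝ)) • c) atTop (𝓝 0) := by
  simpa using (tendsto_one_div_atTop_nhds_zero_nat (𝕜 := ℝ)).smul_const c

theorem Filter.Tendsto.one_div_smul_succ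
    (hx : Tendsto (fun k : ℕ => (1 / (k : ℝ)) • x k) atTop (𝓝 a)) :
    Tendsto (fun k : ℕ => (1 / (k : ℝ)) • x (k + 1)) atTop (𝓝 a) := by
  have hshift : Tendsto (fun k : ℕ => (1 / ((k : ℝ) + 1)) • x (k + 1)) atTop (𝓝 a) := by
    simpa using (tendsto_add_atTop_iff_nat 1).mpr hx
  have hfactor : Tendsto (fun k : ℕ => 1 + 1 / (k : ℝ)) atTop (𝓝 1) := by
    simpa using tendsto_one_div_atTop_nhds_zero_nat.const_add (1 : ℝ)
  have hprod := hfactor.smul hshift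
  rw [one_smul] at hprod
  refine hprod.congr' ?_
  filter_upwards [eventually_ne_atTop 0] with k hk
  rw [smul_smul]
  congr 1
  field_simp

theorem Filter.Tendsto.one_div_smul_sub [IsTopologicalAddGroup E]
    (hx : Tendsto (fun k : ℕ => (1 / (k : ℝ)) • x k) atTop (𝓝 a)) :
    Tendsto (fun k : ℕ => (1 / (k : ℝ)) • (x (k + 1) - x k)) atTop (𝓝 0) := by
  simpa [smul_sub] using hx.one_div_smul_succ.sub hx

end OneDivSmul

section Continuity

variable {α R : Type*} [NonUnitalNonAssocSemiring R] [TopologicalSpace R]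
  [IsTopologicalSemiring R] {l : Filter α}

theorem Filter.Tendsto.matrix_mulVec {ι κ : Type*} [Fintype κ]
    (M : Matrix ι κ R) {x : α → κ → R} {a : κ → R} (hx : Tendsto x l (𝓝 a)) :
    Tendsto (fun k => M *ᵥ x k) l (𝓝 (M *ᵥ a)) :=
  ((continuous_const.matrix_mulVec continuous_id).tendsto a).comp hx

theorem Filter.Tendsto.dotProduct {ι : Type*} [Fintype ι]
    {x y : α → ι → R} {a c : ι → R} (hx : Tendsto x l (𝓝 a)) (hy : Tendsto y l (𝓝 c)) :
    Tendsto (fun k => x k ⬝ᵥ y k) l (𝓝 (a ⬝ᵥ c)) :=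
  ((continuous_fst.dotProduct continuous_snd).tendsto (a, c)).comp (hx.prodMk_nhds hy)

end Continuity

theorem tendsto_one_div_smul_prox_residual {ι κ : Type*} [Fintype κ]
    (c : ι → ℝ) (M : Matrix ι κ ℝ) (σ : ℝ) {x : ℕ → κ → ℝ} {y : ℕ → ι → ℝ} {a : κ → ℝ}
    {d : ι → ℝ} (hx : Tendsto (fun k : ℕ => (1 / (k : ℝ)) • x k) atTop (𝓝 a))
    (hy : Tendsto (fun k : ℕ => (1 / (k : ℝ)) • y k) atTop (𝓝 d)) :
    Tendsto (fun k : ℕ => (1 / (k : ℝ)) • (c - M *ᵥ x (k + 1) + σ • (y (k + 1) - y k)))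
      atTop (𝓝 (-(M *ᵥ a))) := by
  have hlim := ((tendsto_one_div_smul_const c).sub (hx.one_div_smul_succ.matrix_mulVec M)).add
    (hy.one_div_smul_sub.const_smul σ)
  simp only [zero_sub, smul_zero, add_zero] at hlim
  refine hlim.congr fun k => ?_
  rw [mulVec_smul, smul_comm σ, ← smul_sub, ← smul_add]

theorem Matrix.PosSemidef.transpose_mulVec_add_eq_zero {ι κ ν : Type*} [Fintype ι] [Fintype κ]
    [Fintype ν] {H : Matrix ι ι ℝ} (hH : H.PosSemidef) {G : Matrix κ ι ℝ} {A : Matrix ν ι ℝ}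
    {x : ι → ℝ} {y : κ → ℝ} {w : ν → ℝ} (hstat : H *ᵥ x + Gᵀ *ᵥ y + Aᵀ *ᵥ w = 0)
    (hG : G *ᵥ x = 0) (hA : A *ᵥ x ⬝ᵥ w = 0) :
    Gᵀ *ᵥ y + Aᵀ *ᵥ w = 0 := by
  have hquad : star x ⬝ᵥ H *ᵥ x = 0 := by
    have := congrArg (x ⬝ᵥ ·) hstat
    simp only [dotProduct_add, dotProduct_zero, dotProduct_mulVec _ (_ᵀ), vecMul_transpose,
      hG, zero_dotProduct, hA, add_zero] at this
    simpa using this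
  rw [← hstat, (hH.dotProduct_mulVec_zero_iff x).mp hquad, zero_add]

theorem prox_limit_direction_dual_kernel_general (n m q : ℕ)
    (H : Matrix (Fin n) (Fin n) ℝ) (hH : H.PosSemidef)
    (f : Fin n → ℝ) (G : Matrix (Fin m) (Fin n) ℝ) (h : Fin m → ℝ)
    (A : Matrix (Fin q) (Fin n) ℝ) (b : Fin q → ℝ)
    (σ : ℝ)
    (z : ℕ → Fin n → ℝ) (lam : ℕ → Fin m → ℝ) (v : ℕ → Fin q → ℝ)
    (heq1 : ∀ k : ℕ, H.mulVec (z (k + 1)) + f + Gᵀ.mulVec (lam (k + 1)) +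
      Aᵀ.mulVec (v (k + 1)) + σ • (z (k + 1) - z k) = 0)
    (heq2 : ∀ k : ℕ, h - G.mulVec (z (k + 1)) + σ • (lam (k + 1) - lam k) = 0)
    (heq3 : ∀ k : ℕ, (b - A.mulVec (z (k + 1)) + σ • (v (k + 1) - v k)) ⬝ᵥ v (k + 1) = 0)
    (δz : Fin n → ℝ) (δlam : Fin m → ℝ) (δv : Fin q → ℝ)
    (ha1 : Tendsto (fun k : ℕ => (1 / (k : ℝ)) • z k) atTop (𝓝 δz))
    (ha2 : Tendsto (fun k : ℕ => (1 / (k : ℝ)) • lam k) atTop (𝓝 δlam))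
    (ha3 : Tendsto (fun k : ℕ => (1 / (k : ℝ)) • v k) atTop (𝓝 δv)) :
    Gᵀ.mulVec δlam + Aᵀ.mulVec δv = 0 := by
  have hG : G *ᵥ δz = 0 := by
    have hlim := tendsto_one_div_smul_prox_residual h G σ ha1 ha2
    simp only [heq2, smul_zero] at hlim
    exact neg_eq_zero.mp (tendsto_nhds_unique hlim tendsto_const_nhds)
  have hA : A *ᵥ δz ⬝ᵥ δv = 0 := by
    have hlim := (tendsto_one_div_smul_prox_residual b A σ ha1 ha3).dotProduct
      ha3.one_div_smul_succ
    simp only [smul_dotProduct, dotProduct_smul, heq3, smul_zero] at hlim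
    simpa using tendsto_nhds_unique hlim tendsto_const_nhds
  have hstat : H *ᵥ δz + Gᵀ *ᵥ δlam + Aᵀ *ᵥ δv = 0 := by
    have hlim := ((((ha1.one_div_smul_succ.matrix_mulVec H).add
      (tendsto_one_div_smul_const f)).add (ha2.one_div_smul_succ.matrix_mulVec Gᵀ)).add
      (ha3.one_div_smul_succ.matrix_mulVec Aᵀ)).add (ha1.one_div_smul_sub.const_smul σ)
    simp only [mulVec_smul, smul_comm σ, ← smul_add, heq1, smul_zero, add_zero] at hlim
    exact tendsto_nhds_unique tendsto_const_nhds hlim |>.symm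
  exact hH.transpose_mulVec_add_eq_zero hstat hG hA

/-- Under the proximal-iterate hypotheses, `Gᵀδλ + Aᵀδv = 0`. -/
theorem prox_limit_direction_dual_kernel (n m q : ℕ)
    (H : Matrix (Fin n) (Fin n) ℝ) (hH : H.PosSemidef)
    (f : Fin n → ℝ) (G : Matrix (Fin m) (Fin n) ℝ) (h : Fin m → ℝ)
    (A : Matrix (Fin q) (Fin n) ℝ) (b : Fin q → ℝ)
    (σ : ℝ) (hσ : 0 < σ)
    (z : ℕ → Fin n → ℝ) (lam : ℕ → Fin m → ℝ) (v : ℕ → Fin q → ℝ)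
    (heq1 : ∀ k : ℕ, H.mulVec (z (k + 1)) + f + Gᵀ.mulVec (lam (k + 1)) +
      Aᵀ.mulVec (v (k + 1)) + σ • (z (k + 1) - z k) = 0)
    (heq2 : ∀ k : ℕ, h - G.mulVec (z (k + 1)) + σ • (lam (k + 1) - lam k) = 0)
    (heq3 : ∀ k : ℕ, (b - A.mulVec (z (k + 1)) + σ • (v (k + 1) - v k)) ⬝ᵥ v (k + 1) = 0)
    (heq4 : ∀ k : ℕ, 0 ≤ v (k + 1))
    (heq5 : ∀ k : ℕ, 0 ≤ b - A.mulVec (z (k + 1)) + σ • (v (k + 1) - v k))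
    (δz : Fin n → ℝ) (δlam : Fin m → ℝ) (δv : Fin q → ℝ)
    (hd1 : Tendsto (fun k => z (k + 1) - z k) atTop (𝓝 δz))
    (hd2 : Tendsto (fun k => lam (k + 1) - lam k) atTop (𝓝 δlam))
    (hd3 : Tendsto (fun k => v (k + 1) - v k) atTop (𝓝 δv))
    (ha1 : Tendsto (fun k : ℕ => (1 / (k : ℝ)) • z k) atTop (𝓝 δz))
    (ha2 : Tendsto (fun k : ℕ => (1 / (k : ℝ)) • lam k) atTop (𝓝 δlam))
    (ha3 : Tendsto (fun k : ℕ => (1 / (k : ℝ)) • v k) atTop (𝓝 δv)) :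
    Gᵀ.mulVec δlam + Aᵀ.mulVec δv = 0 :=
  prox_limit_direction_dual_kernel_general n m q H hH f G h A b σ z lam v heq1 heq2 heq3 δz δlam δv
    ha1 ha2 ha3
end
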